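/- arXiv:2308.01914 — 5 statements merged into one kernel-verified Lean document; each statement's English description precedes it below -/
import Mathlib

section
/- If x* is a local optimal solution of the unconstrained fuzzy problem min_{x∈T} H(x), H is gH-differentiable at x*, and Ŝ(x*) denotes the cone of feasible directions of T at x*, then Ĥ(x*) ∩ Ŝ(x*) = ∅, where Ĥ(x*) = {τ ∈ ℝⁿ : τᵀ∇H(x*) ≺ 0̃}. -/
open Set Filter Topology

/- If `τ` is a feasible direction along which `H` strictly decreases, then the points
`xs + κ • τ` with small `κ > 0` are feasible, strictly better than `xs`, and (since
`κ ↦ xs + κ • τ` is continuous) arbitrarily close to `xs`, contradicting local optimality. -/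

theorem not_eventually_feasible_improvement {E : Type*} [AddCommGroup E] [Module ℝ E]
    [TopologicalSpace E] [IsTopologicalAddGroup E] [ContinuousSMul ℝ E]
    {T : Set E} {improves : E → Prop} {x τ : E}
    (hopt : ∀ᶠ y in 𝓝 x, y ∈ T → ¬ improves y)
    (hfeas : ∀ᶠ κ in 𝓝[>] (0 : ℝ), x + κ • τ ∈ T)
    (hdesc : ∀ᶠ κ in 𝓝[>] (0 : ℝ), improves (x + κ • τ)) : False := by
  have hray : Tendsto (fun κ : ℝ => x + κ • τ) (𝓝[>] 0) (𝓝 x) := by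
    have : Tendsto (fun κ : ℝ => x + κ • τ) (𝓝 0) (𝓝 (x + (0 : ℝ) • τ)) :=
      (continuous_const.add (continuous_id.smul continuous_const)).tendsto 0
    rw [zero_smul, add_zero] at this
    exact this.mono_left nhdsWithin_le_nhds
  obtain ⟨κ, hnotimp, hmem, himp⟩ := ((hray.eventually hopt).and (hfeas.and hdesc)).exists
  exact hnotimp hmem himp

theorem fuzzy_descent_feasible_disjoint_general {n : ℕ} (T : Set (Fin n → ℝ))
    (Hlo Hhi : (Fin n → ℝ) → ℝ → ℝ) (Glo Ghi : Fin n → ℝ → ℝ)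
    (xs : Fin n → ℝ)
    -- descent property from gH-differentiability of H at xs
    (hdesc : ∀ τ : Fin n → ℝ,
      (∀ ϱ ∈ Icc (0:ℝ) 1,
        (∑ i, min (τ i * Glo i ϱ) (τ i * Ghi i ϱ)) < 0 ∧
        (∑ i, max (τ i * Glo i ϱ) (τ i * Ghi i ϱ)) < 0) →
      ∃ δ > (0:ℝ), ∀ κ ∈ Ioo (0:ℝ) δ, ∀ ϱ ∈ Icc (0:ℝ) 1,
        Hlo (xs + κ • τ) ϱ < Hlo xs ϱ ∧ Hhi (xs + κ • τ) ϱ < Hhi xs ϱ)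
    -- xs is a local optimal solution
    (hopt : ∃ ε > (0:ℝ), ∀ x ∈ T, ‖x - xs‖ < ε →
      ¬ (∀ ϱ ∈ Icc (0:ℝ) 1, Hlo x ϱ < Hlo xs ϱ ∧ Hhi x ϱ < Hhi xs ϱ)) :
    ∀ τ : Fin n → ℝ, ¬ (
      (∀ ϱ ∈ Icc (0:ℝ) 1,
        (∑ i, min (τ i * Glo i ϱ) (τ i * Ghi i ϱ)) < 0 ∧
        (∑ i, max (τ i * Glo i ϱ) (τ i * Ghi i ϱ)) < 0) ∧
      (∃ δ > (0:ℝ), ∀ κ ∈ Ioo (0:ℝ) δ, xs + κ • τ ∈ T)) := by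
  rintro τ ⟨hτ, hfeas⟩
  obtain ⟨ε, hε, hloc⟩ := hopt
  exact not_eventually_feasible_improvement
    (Metric.eventually_nhds_iff.2 ⟨ε, hε, fun x hx hxT => hloc x hxT (by rwa [← dist_eq_norm])⟩)
    ((nhdsGT_basis 0).eventually_iff.2 hfeas) ((nhdsGT_basis 0).eventually_iff.2 (hdesc τ hτ))

/-- at a local optimum `xs` of the unconstrained fuzzy problem with `H`
gH-differentiable at `xs` (encoded by its descent property), the descent cone
`Ĥ(xs) = {τ : τᵀ∇H(xs) ≺ 0̃}` and the cone of feasible directions `Ŝ(xs)` are disjoint. -/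
theorem fuzzy_descent_feasible_disjoint {n : ℕ} (T : Set (Fin n → ℝ))
    (Hlo Hhi : (Fin n → ℝ) → ℝ → ℝ) (Glo Ghi : Fin n → ℝ → ℝ)
    (xs : Fin n → ℝ) (hxs : xs ∈ T)
    (hG : ∀ ϱ ∈ Icc (0:ℝ) 1, ∀ i, Glo i ϱ ≤ Ghi i ϱ)
    -- descent property from gH-differentiability of H at xs
    (hdesc : ∀ τ : Fin n → ℝ,
      (∀ ϱ ∈ Icc (0:ℝ) 1,
        (∑ i, min (τ i * Glo i ϱ) (τ i * Ghi i ϱ)) < 0 ∧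
        (∑ i, max (τ i * Glo i ϱ) (τ i * Ghi i ϱ)) < 0) →
      ∃ δ > (0:ℝ), ∀ κ ∈ Ioo (0:ℝ) δ, ∀ ϱ ∈ Icc (0:ℝ) 1,
        Hlo (xs + κ • τ) ϱ < Hlo xs ϱ ∧ Hhi (xs + κ • τ) ϱ < Hhi xs ϱ)
    -- xs is a local optimal solution
    (hopt : ∃ ε > (0:ℝ), ∀ x ∈ T, ‖x - xs‖ < ε →
      ¬ (∀ ϱ ∈ Icc (0:ℝ) 1, Hlo x ϱ < Hlo xs ϱ ∧ Hhi x ϱ < Hhi xs ϱ)) :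
    ∀ τ : Fin n → ℝ, ¬ (
      (∀ ϱ ∈ Icc (0:ℝ) 1,
        (∑ i, min (τ i * Glo i ϱ) (τ i * Ghi i ϱ)) < 0 ∧
        (∑ i, max (τ i * Glo i ϱ) (τ i * Ghi i ϱ)) < 0) ∧
      (∃ δ > (0:ℝ), ∀ κ ∈ Ioo (0:ℝ) δ, xs + κ • τ ∈ T)) :=
  fuzzy_descent_feasible_disjoint_general T Hlo Hhi Glo Ghi xs hdesc hopt
end

section
/- Mutual exclusivity in the fuzzy Gordan theorem for matrices: if there exists y ∈ ℝˢ such that for every column j of the s×n interval matrix M_ϱ (ϱ ∈ [0,1] fixed) the interval (Mᵀ_ϱ y)_j = Σ_i y_i [m_{ij}]^ϱ has both endpoints strictly negative, then there is no nonzero x ∈ ℝⁿ with x_j ≥ 0 for all j such that 0 ∈ (M_ϱ x)_i = Σ_j x_j [m_{ij}]^ϱ for every row i. -/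
/-!
Only upper endpoints matter. For a row `i`, the interval `(M x)_i = [L, U]` contains `0`, so the
upper endpoint of `y_i [L, U]` is nonnegative; bounding it termwise by `x_j` times the upper
endpoint of `y_i [m_ij]` and summing over `i` gives `0 ≤ Σ_j x_j u_j`, where `u_j < 0` is the upper
endpoint of `(Mᵀ y)_j`. As `x ≥ 0` has a positive entry, that sum is negative.
-/

lemma mul_min_le_max_mul (y a b : ℝ) : y * min a b ≤ max (y * a) (y * b) := by
  rcases min_choice a b with h | h <;> rw [h]
  exacts [le_max_left _ _, le_max_right _ _]

lemma mul_max_le_max_mul (y a b : ℝ) : y * max a b ≤ max (y * a) (y * b) := by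
  rcases max_choice a b with h | h <;> rw [h]
  exacts [le_max_left _ _, le_max_right _ _]

lemma zero_le_max_mul_of_nonpos_of_nonneg {L U : ℝ} (hL : L ≤ 0) (hU : 0 ≤ U) (y : ℝ) :
    0 ≤ max (y * L) (y * U) := by
  rcases le_total 0 y with hy | hy
  · exact (mul_nonneg hy hU).trans (le_max_right _ _)
  · exact (mul_nonneg_of_nonpos_of_nonpos hy hL).trans (le_max_left _ _)

section

variable {ι : Type*} [Fintype ι] {x : ι → ℝ}

lemma zero_le_sum_mul_max_mul_of_zero_mem_sum {a b : ι → ℝ} (hx : 0 ≤ x)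
    (hlo : ∑ j, min (x j * a j) (x j * b j) ≤ 0) (hhi : 0 ≤ ∑ j, max (x j * a j) (x j * b j))
    (y : ℝ) : 0 ≤ ∑ j, x j * max (y * a j) (y * b j) := by
  simp only [← mul_min_of_nonneg _ _ (hx _), ← mul_max_of_nonneg _ _ (hx _)] at hlo hhi
  refine (zero_le_max_mul_of_nonpos_of_nonneg hlo hhi y).trans (max_le ?_ ?_) <;>
    rw [Finset.mul_sum] <;> refine Finset.sum_le_sum fun j _ => ?_ <;> rw [mul_left_comm]
  exacts [mul_le_mul_of_nonneg_left (mul_min_le_max_mul _ _ _) (hx j),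
    mul_le_mul_of_nonneg_left (mul_max_le_max_mul _ _ _) (hx j)]

lemma sum_mul_neg_of_pos_of_neg {c : ι → ℝ} (hx : 0 < x) (hc : ∀ j, c j < 0) :
    ∑ j, x j * c j < 0 := by
  obtain ⟨hx, j, hj⟩ := Pi.lt_def.1 hx
  calc ∑ j, x j * c j < ∑ _j : ι, (0 : ℝ) :=
        Finset.sum_lt_sum (fun k _ => mul_nonpos_of_nonneg_of_nonpos (hx k) (hc k).le)
          ⟨j, Finset.mem_univ j, mul_neg_of_pos_of_neg hj (hc j)⟩
    _ = 0 := Finset.sum_const_zero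

end

theorem interval_gordan_exclusive_general {s n : ℕ} (alo ahi : Fin s → Fin n → ℝ)
    (y : Fin s → ℝ)
    (hy : ∀ j, (∑ i, min (y i * alo i j) (y i * ahi i j)) < 0 ∧
      (∑ i, max (y i * alo i j) (y i * ahi i j)) < 0) :
    ¬ ∃ x : Fin n → ℝ, x ≠ 0 ∧ (∀ j, 0 ≤ x j) ∧
      ∀ i, (∑ j, min (x j * alo i j) (x j * ahi i j)) ≤ 0 ∧
        0 ≤ (∑ j, max (x j * alo i j) (x j * ahi i j)) := by
  rintro ⟨x, hx0, hxnn, hxi⟩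
  have hrows : 0 ≤ ∑ i, ∑ j, x j * max (y i * alo i j) (y i * ahi i j) :=
    Finset.sum_nonneg fun i _ =>
      zero_le_sum_mul_max_mul_of_zero_mem_sum hxnn (hxi i).1 (hxi i).2 (y i)
  have hcols : ∑ j, x j * ∑ i, max (y i * alo i j) (y i * ahi i j) < 0 :=
    sum_mul_neg_of_pos_of_neg (lt_of_le_of_ne hxnn hx0.symm) fun j => (hy j).2
  simp only [Finset.mul_sum] at hcols
  rw [Finset.sum_comm] at hcols
  exact hrows.not_gt hcols

/-- mutual exclusivity in the interval/fuzzy Gordan theorem for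
matrices, at a fixed level. If `y ∈ ℝˢ` makes every column combination
`(Mᵀy)_j = Σ_i y_i [alo i j, ahi i j]` strictly negative (both endpoints `< 0`),
then there is no nonzero `x ≥ 0` with `0 ∈ (M x)_i` for every row `i`. -/
theorem interval_gordan_exclusive {s n : ℕ} (alo ahi : Fin s → Fin n → ℝ)
    (h : ∀ i j, alo i j ≤ ahi i j) (y : Fin s → ℝ)
    (hy : ∀ j, (∑ i, min (y i * alo i j) (y i * ahi i j)) < 0 ∧
      (∑ i, max (y i * alo i j) (y i * ahi i j)) < 0) :
    ¬ ∃ x : Fin n → ℝ, x ≠ 0 ∧ (∀ j, 0 ≤ x j) ∧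
      ∀ i, (∑ j, min (x j * alo i j) (x j * ahi i j)) ≤ 0 ∧
        0 ≤ (∑ j, max (x j * alo i j) (x j * ahi i j)) :=
  interval_gordan_exclusive_general alo ahi y hy
end

section
/- Fuzzy KKT necessary condition under linear independence: in the Fritz-John setting, if additionally the fuzzy gradient vectors {∇Y_j(x*) : j ∈ Λ(x*)} are linearly independent (meaning: whenever real scalars ϑ_j satisfy 0 ∈ Σ_{j∈Λ(x*)} ϑ_j D_iY_{j,ϱ}(x*) for all coordinates i and all ϱ ∈ [0,1], then all ϑ_j = 0), then the Fritz-John multiplier κ₀ can be taken positive, and hence there exist κ_j ≥ 0, j ∈ Λ(x*), with 0 ∈ D_iH_ϱ(x*) + Σ_{j∈Λ(x*)} κ_j D_iY_{j,ϱ}(x*) for all i and all ϱ ∈ [0,1]. -/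
/-!
If the Fritz–John multiplier of the objective vanished, the Fritz–John inclusion would read
`0 ∈ Σ κ_j D_iY_{j,ϱ}(x*)`, and linear independence would force all `κ_j = 0` as well.
So `κ₀ > 0`, and dividing every multiplier by `κ₀` gives the KKT multipliers.
-/

open Set

lemma add_sum_div_mul_eq_div {ι : Type*} (s : Finset ι) {c : ℝ} (hc : c ≠ 0) (a : ℝ)
    (κ b : ι → ℝ) :
    a + ∑ j ∈ s, κ j / c * b j = (c * a + ∑ j ∈ s, κ j * b j) / c := by
  rw [add_div, Finset.sum_div, mul_div_cancel_left₀ a hc]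
  exact congrArg _ (Finset.sum_congr rfl fun j _ => div_mul_eq_mul_div (κ j) c (b j))

theorem fritzJohn_multiplier_pos {α ι : Type*} {Λ : Finset ι} {Hlo Hhi : α → ℝ → ℝ}
    {Ylo Yhi : ι → α → ℝ → ℝ} {κ₀ : ℝ} {κ : ι → ℝ} (hκ₀ : 0 ≤ κ₀)
    (hκ : ¬ (κ₀ = 0 ∧ ∀ j ∈ Λ, κ j = 0))
    (hFJ : ∀ ϱ ∈ Icc (0:ℝ) 1, ∀ i,
      κ₀ * Hlo i ϱ + ∑ j ∈ Λ, κ j * Ylo j i ϱ ≤ 0 ∧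
      0 ≤ κ₀ * Hhi i ϱ + ∑ j ∈ Λ, κ j * Yhi j i ϱ)
    (hLI : ∀ ϑ : ι → ℝ,
      (∀ ϱ ∈ Icc (0:ℝ) 1, ∀ i,
        (∑ j ∈ Λ, min (ϑ j * Ylo j i ϱ) (ϑ j * Yhi j i ϱ)) ≤ 0 ∧
        0 ≤ ∑ j ∈ Λ, max (ϑ j * Ylo j i ϱ) (ϑ j * Yhi j i ϱ)) →
      ∀ j ∈ Λ, ϑ j = 0) :
    0 < κ₀ := by
  refine hκ₀.lt_of_ne fun h₀ => hκ ⟨h₀.symm, hLI κ fun ϱ hϱ i => ?_⟩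
  obtain ⟨hlo, hhi⟩ := hFJ ϱ hϱ i
  rw [← h₀, zero_mul, zero_add] at hlo hhi
  exact ⟨(Finset.sum_le_sum fun j _ => min_le_left _ _).trans hlo,
    hhi.trans (Finset.sum_le_sum fun j _ => le_max_right _ _)⟩

theorem fuzzy_kkt_necessary_general {n s : ℕ}
    (HGlo HGhi : Fin n → ℝ → ℝ)
    (YGlo YGhi : Fin s → Fin n → ℝ → ℝ)
    (Λ : Finset (Fin s))
    -- Fritz-John condition (established at a local optimum)
    (hFJ : ∃ κ₀ : ℝ, ∃ κ : Fin s → ℝ,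
      0 ≤ κ₀ ∧ (∀ j ∈ Λ, 0 ≤ κ j) ∧
      ¬ (κ₀ = 0 ∧ ∀ j ∈ Λ, κ j = 0) ∧
      ∀ ϱ ∈ Icc (0:ℝ) 1, ∀ i,
        κ₀ * HGlo i ϱ + ∑ j ∈ Λ, κ j * YGlo j i ϱ ≤ 0 ∧
        0 ≤ κ₀ * HGhi i ϱ + ∑ j ∈ Λ, κ j * YGhi j i ϱ)
    -- linear independence of the active fuzzy gradients
    (hLI : ∀ ϑ : Fin s → ℝ,
      (∀ ϱ ∈ Icc (0:ℝ) 1, ∀ i,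
        (∑ j ∈ Λ, min (ϑ j * YGlo j i ϱ) (ϑ j * YGhi j i ϱ)) ≤ 0 ∧
        0 ≤ ∑ j ∈ Λ, max (ϑ j * YGlo j i ϱ) (ϑ j * YGhi j i ϱ)) →
      ∀ j ∈ Λ, ϑ j = 0) :
    ∃ κ : Fin s → ℝ, (∀ j ∈ Λ, 0 ≤ κ j) ∧
      ∀ ϱ ∈ Icc (0:ℝ) 1, ∀ i,
        HGlo i ϱ + ∑ j ∈ Λ, κ j * YGlo j i ϱ ≤ 0 ∧
        0 ≤ HGhi i ϱ + ∑ j ∈ Λ, κ j * YGhi j i ϱ := by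
  obtain ⟨κ₀, κ, hκ₀, hκ, hnz, hineq⟩ := hFJ
  have hκ₀pos : 0 < κ₀ := fritzJohn_multiplier_pos hκ₀ hnz hineq hLI
  refine ⟨fun j => κ j / κ₀, fun j hj => div_nonneg (hκ j hj) hκ₀, fun ϱ hϱ i => ?_⟩
  obtain ⟨hlo, hhi⟩ := hineq ϱ hϱ i
  rw [add_sum_div_mul_eq_div _ hκ₀pos.ne', add_sum_div_mul_eq_div _ hκ₀pos.ne']
  exact ⟨div_nonpos_of_nonpos_of_nonneg hlo hκ₀, div_nonneg hhi hκ₀⟩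

/-- fuzzy KKT necessary condition under linear independence. In the
Fritz-John setting (the Fritz-John multipliers exist), if the active fuzzy gradient
vectors `{∇Y_j(xs) : j ∈ Λ}` are linearly independent (whenever
`0 ∈ Σ_{j∈Λ} ϑ_j D_iY_{j,ϱ}(xs)` for all `i, ϱ`, all `ϑ_j = 0`), then multipliers
with `κ₀ = 1 > 0` exist: there are `κ_j ≥ 0` (`j ∈ Λ`) with
`0 ∈ D_iH_ϱ(xs) + Σ_{j∈Λ} κ_j D_iY_{j,ϱ}(xs)` for all `i` and `ϱ`. -/
theorem fuzzy_kkt_necessary {n s : ℕ}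
    (HGlo HGhi : Fin n → ℝ → ℝ)
    (YGlo YGhi : Fin s → Fin n → ℝ → ℝ)
    (Λ : Finset (Fin s))
    (hHG : ∀ i, ∀ ϱ ∈ Icc (0:ℝ) 1, HGlo i ϱ ≤ HGhi i ϱ)
    (hYG : ∀ j i, ∀ ϱ ∈ Icc (0:ℝ) 1, YGlo j i ϱ ≤ YGhi j i ϱ)
    -- Fritz-John condition (established at a local optimum)
    (hFJ : ∃ κ₀ : ℝ, ∃ κ : Fin s → ℝ,
      0 ≤ κ₀ ∧ (∀ j ∈ Λ, 0 ≤ κ j) ∧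
      ¬ (κ₀ = 0 ∧ ∀ j ∈ Λ, κ j = 0) ∧
      ∀ ϱ ∈ Icc (0:ℝ) 1, ∀ i,
        κ₀ * HGlo i ϱ + ∑ j ∈ Λ, κ j * YGlo j i ϱ ≤ 0 ∧
        0 ≤ κ₀ * HGhi i ϱ + ∑ j ∈ Λ, κ j * YGhi j i ϱ)
    -- linear independence of the active fuzzy gradients
    (hLI : ∀ ϑ : Fin s → ℝ,
      (∀ ϱ ∈ Icc (0:ℝ) 1, ∀ i,
        (∑ j ∈ Λ, min (ϑ j * YGlo j i ϱ) (ϑ j * YGhi j i ϱ)) ≤ 0 ∧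
        0 ≤ ∑ j ∈ Λ, max (ϑ j * YGlo j i ϱ) (ϑ j * YGhi j i ϱ)) →
      ∀ j ∈ Λ, ϑ j = 0) :
    ∃ κ : Fin s → ℝ, (∀ j ∈ Λ, 0 ≤ κ j) ∧
      ∀ ϱ ∈ Icc (0:ℝ) 1, ∀ i,
        HGlo i ϱ + ∑ j ∈ Λ, κ j * YGlo j i ϱ ≤ 0 ∧
        0 ≤ HGhi i ϱ + ∑ j ∈ Λ, κ j * YGhi j i ϱ :=
  fuzzy_kkt_necessary_general HGlo HGhi YGlo YGhi Λ hFJ hLI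
end

section
/- Fuzzy KKT sufficient condition: let H, Y₁,...,Y_s : T → F_C be gH-differentiable convex fuzzy functions on an open convex set T, and suppose x* is feasible (Y_j(x*) ⪯ 0̃ for all j) and there exist κ_j ≥ 0 with κ_j Y_j(x*) = 0̃ for all j and, for all ϱ ∈ [0,1] and all coordinates i, 0 ∈ D_iH_ϱ(x*) + Σ_j κ_j D_iY_{j,ϱ}(x*). Then x* is an optimal solution: there is no feasible x with H(x) ≺ H(x*). -/
open Set

/-!
Put `d := x - xs` for a feasible `x` with `H(x) ≺ H(xs)` and look at the upper endpoints of the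
cut at level `0`. Stationarity says the interval gradient of the Lagrangian contains `0` in every
coordinate, so the upper endpoint of its product with `d` is nonnegative. That endpoint is
subadditive and positively homogeneous in the gradient, so it is bounded by the sum of the
corresponding endpoints for `H` and the `κ_j Y_j`. By the gradient inequalities these are at most
the upper endpoints of `H(x) ⊖_gH H(xs)`, which is negative, and of `κ_j (Y_j(x) ⊖_gH Y_j(xs))`,
which is nonpositive by complementary slackness and feasibility of `x`.
-/

section IntervalDot

variable {ι : Type*} [Fintype ι]

/-- Upper endpoint of the interval dot product `vᵀ [a, b]`, where the `i`-th entry is the interval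
with endpoints `a i` and `b i` in either order. -/
def dotUpper (v a b : ι → ℝ) : ℝ := ∑ i, max (v i * a i) (v i * b i)

theorem dotUpper_zero (v : ι → ℝ) : dotUpper v 0 0 = 0 := by
  simp [dotUpper]

theorem dotUpper_add_le (v a b a' b' : ι → ℝ) :
    dotUpper v (a + a') (b + b') ≤ dotUpper v a b + dotUpper v a' b' := by
  rw [dotUpper, dotUpper, dotUpper, ← Finset.sum_add_distrib]
  refine Finset.sum_le_sum fun i _ => ?_
  simpa only [Pi.add_apply, mul_add] using max_add_add_le_max_add_max

theorem dotUpper_smul (v a b : ι → ℝ) {c : ℝ} (hc : 0 ≤ c) :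
    dotUpper v (c • a) (c • b) = c * dotUpper v a b := by
  simp only [dotUpper, Finset.mul_sum, mul_max_of_nonneg _ _ hc, Pi.smul_apply, smul_eq_mul,
    mul_left_comm c]

theorem dotUpper_sum_le {J : Type*} (s : Finset J) (v : ι → ℝ) (a b : J → ι → ℝ) :
    dotUpper v (∑ j ∈ s, a j) (∑ j ∈ s, b j) ≤ ∑ j ∈ s, dotUpper v (a j) (b j) := by
  simpa only [Prod.fst_sum, Prod.snd_sum] using
    Finset.le_sum_of_subadditive (fun p : (ι → ℝ) × (ι → ℝ) => dotUpper v p.1 p.2)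
      (dotUpper_zero v).le (fun p q => dotUpper_add_le v p.1 p.2 q.1 q.2) s (fun j => (a j, b j))

theorem dotUpper_add_sum_mul_le {J : Type*} [Fintype J] (v a b : ι → ℝ) (a' b' : J → ι → ℝ)
    (κ : J → ℝ) (hκ : ∀ j, 0 ≤ κ j) :
    dotUpper v (fun i => a i + ∑ j, κ j * a' j i) (fun i => b i + ∑ j, κ j * b' j i) ≤
      dotUpper v a b + ∑ j, κ j * dotUpper v (a' j) (b' j) := by
  have hsum (c : J → ι → ℝ) : (fun i => ∑ j, κ j * c j i) = ∑ j, κ j • c j := by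
    ext i
    simp [Finset.sum_apply]
  calc dotUpper v (fun i => a i + ∑ j, κ j * a' j i) (fun i => b i + ∑ j, κ j * b' j i)
      ≤ dotUpper v a b + dotUpper v (∑ j, κ j • a' j) (∑ j, κ j • b' j) := by
        rw [← hsum, ← hsum]
        exact dotUpper_add_le v a b _ _
    _ ≤ dotUpper v a b + ∑ j, dotUpper v (κ j • a' j) (κ j • b' j) := by
        gcongr
        exact dotUpper_sum_le _ v _ _
    _ = dotUpper v a b + ∑ j, κ j * dotUpper v (a' j) (b' j) := by
        simp only [dotUpper_smul v _ _ (hκ _)]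

theorem dotUpper_nonneg_of_zero_mem (v a b : ι → ℝ) (h : ∀ i, a i ≤ 0 ∧ 0 ≤ b i) :
    0 ≤ dotUpper v a b := by
  refine Finset.sum_nonneg fun i _ => ?_
  obtain ⟨ha, hb⟩ := h i
  rcases le_total 0 (v i) with hv | hv
  · exact le_max_of_le_right (mul_nonneg hv hb)
  · exact le_max_of_le_left (mul_nonneg_of_nonpos_of_nonpos hv ha)

end IntervalDot

theorem mul_max_sub_nonpos_of_slack {κ a b a₀ b₀ : ℝ} (hκ : 0 ≤ κ)
    (hcs : κ = 0 ∨ a₀ = 0 ∧ b₀ = 0) (ha : a ≤ 0) (hb : b ≤ 0) :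
    κ * max (a - a₀) (b - b₀) ≤ 0 := by
  rcases hcs with rfl | ⟨rfl, rfl⟩
  · simp
  · exact mul_nonpos_of_nonneg_of_nonpos hκ (by simp [ha, hb])

theorem fuzzy_kkt_sufficient_general {n s : ℕ} (T : Set (Fin n → ℝ))
    (Hlo Hhi : (Fin n → ℝ) → ℝ → ℝ)
    (Ylo Yhi : Fin s → (Fin n → ℝ) → ℝ → ℝ)
    (HGlo HGhi : Fin n → ℝ → ℝ)
    (YGlo YGhi : Fin s → Fin n → ℝ → ℝ)
    (xs : Fin n → ℝ)
    (κ : Fin s → ℝ) (hκ : ∀ j, 0 ≤ κ j)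
    -- complementary slackness: κ_j Y_j(xs) = 0̃
    (hcs : ∀ j, κ j = 0 ∨ ∀ ϱ ∈ Icc (0:ℝ) 1, Ylo j xs ϱ = 0 ∧ Yhi j xs ϱ = 0)
    -- stationarity
    (hstat : ∀ ϱ ∈ Icc (0:ℝ) 1, ∀ i,
      HGlo i ϱ + ∑ j, κ j * YGlo j i ϱ ≤ 0 ∧
      0 ≤ HGhi i ϱ + ∑ j, κ j * YGhi j i ϱ)
    -- gradient inequality for convex gH-differentiable H: (x-xs)ᵀ∇H(xs) ⪯ H(x) ⊖_gH H(xs)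
    (hgradH : ∀ x ∈ T, ∀ ϱ ∈ Icc (0:ℝ) 1,
      (∑ i, min ((x i - xs i) * HGlo i ϱ) ((x i - xs i) * HGhi i ϱ)) ≤
        min (Hlo x ϱ - Hlo xs ϱ) (Hhi x ϱ - Hhi xs ϱ) ∧
      (∑ i, max ((x i - xs i) * HGlo i ϱ) ((x i - xs i) * HGhi i ϱ)) ≤
        max (Hlo x ϱ - Hlo xs ϱ) (Hhi x ϱ - Hhi xs ϱ))
    -- gradient inequality for the convex gH-differentiable constraints
    (hgradY : ∀ j, ∀ x ∈ T, ∀ ϱ ∈ Icc (0:ℝ) 1,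
      (∑ i, min ((x i - xs i) * YGlo j i ϱ) ((x i - xs i) * YGhi j i ϱ)) ≤
        min (Ylo j x ϱ - Ylo j xs ϱ) (Yhi j x ϱ - Yhi j xs ϱ) ∧
      (∑ i, max ((x i - xs i) * YGlo j i ϱ) ((x i - xs i) * YGhi j i ϱ)) ≤
        max (Ylo j x ϱ - Ylo j xs ϱ) (Yhi j x ϱ - Yhi j xs ϱ)) :
    ¬ ∃ x ∈ T, (∀ j, ∀ ϱ ∈ Icc (0:ℝ) 1, Ylo j x ϱ ≤ 0 ∧ Yhi j x ϱ ≤ 0) ∧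
      (∀ ϱ ∈ Icc (0:ℝ) 1, Hlo x ϱ < Hlo xs ϱ ∧ Hhi x ϱ < Hhi xs ϱ) := by
  rintro ⟨x, hxT, hxfeas, hxlt⟩
  have h0 : (0 : ℝ) ∈ Icc (0 : ℝ) 1 := ⟨le_rfl, zero_le_one⟩
  have hLagrangian := (dotUpper_nonneg_of_zero_mem (x - xs) _ _ (hstat 0 h0)).trans
    (dotUpper_add_sum_mul_le (x - xs) (HGlo · 0) (HGhi · 0) (YGlo · · 0) (YGhi · · 0) κ hκ)
  have hH : dotUpper (x - xs) (HGlo · 0) (HGhi · 0) < 0 := by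
    obtain ⟨hlo, hhi⟩ := hxlt 0 h0
    exact (hgradH x hxT 0 h0).2.trans_lt (max_lt (by linarith) (by linarith))
  have hY (j : Fin s) : κ j * dotUpper (x - xs) (YGlo j · 0) (YGhi j · 0) ≤ 0 :=
    (mul_le_mul_of_nonneg_left (hgradY j x hxT 0 h0).2 (hκ j)).trans <|
      mul_max_sub_nonpos_of_slack (hκ j) ((hcs j).imp_right (· 0 h0)) (hxfeas j 0 h0).1
        (hxfeas j 0 h0).2
  linarith [Finset.sum_nonpos fun j (_ : j ∈ Finset.univ) => hY j]

/-- fuzzy KKT sufficient condition. Let `H, Y_j` be gH-differentiable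
convex fuzzy functions on an open convex `T` (convexity being used through the
gradient inequality `(x - xs)ᵀ∇F(xs) ⪯ F(x) ⊖_gH F(xs)`, available as a lemma),
`xs` feasible, and suppose multipliers `κ_j ≥ 0` satisfy complementary slackness
`κ_j Y_j(xs) = 0̃` and stationarity `0 ∈ D_iH_ϱ(xs) + Σ_j κ_j D_iY_{j,ϱ}(xs)` for
all `i, ϱ`.  Then `xs` is optimal: no feasible `x` has `H(x) ≺ H(xs)`. -/
theorem fuzzy_kkt_sufficient {n s : ℕ} (T : Set (Fin n → ℝ))
    (hT : IsOpen T) (hTc : Convex ℝ T)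
    (Hlo Hhi : (Fin n → ℝ) → ℝ → ℝ)
    (Ylo Yhi : Fin s → (Fin n → ℝ) → ℝ → ℝ)
    (HGlo HGhi : Fin n → ℝ → ℝ)
    (YGlo YGhi : Fin s → Fin n → ℝ → ℝ)
    (xs : Fin n → ℝ) (hxsT : xs ∈ T)
    -- xs is feasible
    (hfeas : ∀ j, ∀ ϱ ∈ Icc (0:ℝ) 1, Ylo j xs ϱ ≤ 0 ∧ Yhi j xs ϱ ≤ 0)
    (κ : Fin s → ℝ) (hκ : ∀ j, 0 ≤ κ j)
    -- complementary slackness: κ_j Y_j(xs) = 0̃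
    (hcs : ∀ j, κ j = 0 ∨ ∀ ϱ ∈ Icc (0:ℝ) 1, Ylo j xs ϱ = 0 ∧ Yhi j xs ϱ = 0)
    -- stationarity
    (hstat : ∀ ϱ ∈ Icc (0:ℝ) 1, ∀ i,
      HGlo i ϱ + ∑ j, κ j * YGlo j i ϱ ≤ 0 ∧
      0 ≤ HGhi i ϱ + ∑ j, κ j * YGhi j i ϱ)
    -- gradient inequality for convex gH-differentiable H: (x-xs)ᵀ∇H(xs) ⪯ H(x) ⊖_gH H(xs)
    (hgradH : ∀ x ∈ T, ∀ ϱ ∈ Icc (0:ℝ) 1,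
      (∑ i, min ((x i - xs i) * HGlo i ϱ) ((x i - xs i) * HGhi i ϱ)) ≤
        min (Hlo x ϱ - Hlo xs ϱ) (Hhi x ϱ - Hhi xs ϱ) ∧
      (∑ i, max ((x i - xs i) * HGlo i ϱ) ((x i - xs i) * HGhi i ϱ)) ≤
        max (Hlo x ϱ - Hlo xs ϱ) (Hhi x ϱ - Hhi xs ϱ))
    -- gradient inequality for the convex gH-differentiable constraints
    (hgradY : ∀ j, ∀ x ∈ T, ∀ ϱ ∈ Icc (0:ℝ) 1,
      (∑ i, min ((x i - xs i) * YGlo j i ϱ) ((x i - xs i) * YGhi j i ϱ)) ≤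
        min (Ylo j x ϱ - Ylo j xs ϱ) (Yhi j x ϱ - Yhi j xs ϱ) ∧
      (∑ i, max ((x i - xs i) * YGlo j i ϱ) ((x i - xs i) * YGhi j i ϱ)) ≤
        max (Ylo j x ϱ - Ylo j xs ϱ) (Yhi j x ϱ - Yhi j xs ϱ)) :
    ¬ ∃ x ∈ T, (∀ j, ∀ ϱ ∈ Icc (0:ℝ) 1, Ylo j x ϱ ≤ 0 ∧ Yhi j x ϱ ≤ 0) ∧
      (∀ ϱ ∈ Icc (0:ℝ) 1, Hlo x ϱ < Hlo xs ϱ ∧ Hhi x ϱ < Hhi xs ϱ) :=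
  fuzzy_kkt_sufficient_general T Hlo Hhi Ylo Yhi HGlo HGhi YGlo YGhi xs κ hκ hcs hstat hgradH hgradY
end

section
/- Gradient inequality for convex interval-valued functions: let F : T → 𝕀(ℝ) be an interval-valued function on a convex open T ⊆ ℝⁿ, F(x) = [F̲(x), F̄(x)], which is gH-differentiable (the limit (1/ϑ)(F(x+ϑd) ⊖_gH F(x)) exists as ϑ → 0⁺, in Hausdorff distance) and convex in the sense F(ϑx₁+(1−ϑ)x₂) ⪯≦_LU ϑF(x₁)+(1−ϑ)F(x₂). Then for all x₁, x₂ ∈ T: (x₂−x₁)ᵀ∇F(x₁) ⪯≦_LU F(x₂) ⊖_gH F(x₁). -/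
/-!
Convexity bounds each endpoint's increment along the segment, `F(x₁ + ϑ(x₂ - x₁)) - F(x₁)`,
by `ϑ` times its increment `F(x₂) - F(x₁)`. Since `min` and `max` are monotone and commute
with scaling by `ϑ ≥ 0`, the gH difference quotient is bounded by `F(x₂) ⊖_gH F(x₁)` for every
`ϑ ∈ (0, 1)`, and the bound survives the limit `ϑ → 0⁺`.
-/

open Set Filter Topology

theorem sub_le_mul_sub_of_segment_le {E : Type*} [AddCommGroup E] [Module ℝ E] {f : E → ℝ}
    {x y : E} {ϑ : ℝ} (h : f (ϑ • y + (1 - ϑ) • x) ≤ ϑ * f y + (1 - ϑ) * f x) :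
    f (x + ϑ • (y - x)) - f x ≤ ϑ * (f y - f x) := by
  have hseg : x + ϑ • (y - x) = ϑ • y + (1 - ϑ) • x := by module
  rw [hseg]
  linarith

theorem le_of_tendsto_one_div_mul_of_le_mul {q : ℝ → ℝ} {L c : ℝ}
    (hq : Tendsto (fun ϑ => (1 / ϑ) * q ϑ) (𝓝[>] 0) (𝓝 L))
    (hle : ∀ ϑ ∈ Ioo (0 : ℝ) 1, q ϑ ≤ ϑ * c) : L ≤ c := by
  refine le_of_tendsto hq ?_
  filter_upwards [Ioo_mem_nhdsGT one_pos] with ϑ hϑ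
  rw [one_div, inv_mul_le_iff₀ hϑ.1]
  exact hle ϑ hϑ

theorem interval_convex_gradient_inequality_general {n : ℕ} (T : Set (Fin n → ℝ))
    (Flo Fhi : (Fin n → ℝ) → ℝ)
    (Glo Ghi : (Fin n → ℝ) → Fin n → ℝ)
    -- gH-differentiability of F on T
    (hdiff : ∀ x ∈ T, ∀ d : Fin n → ℝ,
      Tendsto (fun ϑ : ℝ =>
          (1/ϑ) * min (Flo (x + ϑ • d) - Flo x) (Fhi (x + ϑ • d) - Fhi x))
        (𝓝[>] 0) (𝓝 (∑ i, min (d i * Glo x i) (d i * Ghi x i))) ∧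
      Tendsto (fun ϑ : ℝ =>
          (1/ϑ) * max (Flo (x + ϑ • d) - Flo x) (Fhi (x + ϑ • d) - Fhi x))
        (𝓝[>] 0) (𝓝 (∑ i, max (d i * Glo x i) (d i * Ghi x i))))
    -- convexity of F in the ⪯≦_LU sense
    (hconv : ∀ x₁ ∈ T, ∀ x₂ ∈ T, ∀ ϑ ∈ Ioo (0:ℝ) 1,
      Flo (ϑ • x₁ + (1-ϑ) • x₂) ≤ ϑ * Flo x₁ + (1-ϑ) * Flo x₂ ∧
      Fhi (ϑ • x₁ + (1-ϑ) • x₂) ≤ ϑ * Fhi x₁ + (1-ϑ) * Fhi x₂) :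
    ∀ x₁ ∈ T, ∀ x₂ ∈ T,
      (∑ i, min ((x₂ i - x₁ i) * Glo x₁ i) ((x₂ i - x₁ i) * Ghi x₁ i)) ≤
        min (Flo x₂ - Flo x₁) (Fhi x₂ - Fhi x₁) ∧
      (∑ i, max ((x₂ i - x₁ i) * Glo x₁ i) ((x₂ i - x₁ i) * Ghi x₁ i)) ≤
        max (Flo x₂ - Flo x₁) (Fhi x₂ - Fhi x₁) := by
  intro x₁ hx₁ x₂ hx₂
  obtain ⟨hmin, hmax⟩ := hdiff x₁ hx₁ (x₂ - x₁)
  have hquot : ∀ ϑ ∈ Ioo (0 : ℝ) 1,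
      Flo (x₁ + ϑ • (x₂ - x₁)) - Flo x₁ ≤ ϑ * (Flo x₂ - Flo x₁) ∧
      Fhi (x₁ + ϑ • (x₂ - x₁)) - Fhi x₁ ≤ ϑ * (Fhi x₂ - Fhi x₁) := fun ϑ hϑ =>
    (hconv x₂ hx₂ x₁ hx₁ ϑ hϑ).imp sub_le_mul_sub_of_segment_le sub_le_mul_sub_of_segment_le
  constructor
  · refine le_of_tendsto_one_div_mul_of_le_mul hmin fun ϑ hϑ => ?_
    rw [mul_min_of_nonneg _ _ hϑ.1.le]
    exact min_le_min (hquot ϑ hϑ).1 (hquot ϑ hϑ).2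
  · refine le_of_tendsto_one_div_mul_of_le_mul hmax fun ϑ hϑ => ?_
    rw [mul_max_of_nonneg _ _ hϑ.1.le]
    exact max_le_max (hquot ϑ hϑ).1 (hquot ϑ hϑ).2

/-- gradient inequality for convex interval-valued functions. If
`F = [F̲, F̄] : T → 𝕀(ℝ)` is gH-differentiable on an open convex `T` (the gH
difference quotients converge endpointwise, equivalently in Hausdorff distance, to
the interval `dᵀ∇F(x)`) and convex (`F(ϑx₁+(1-ϑ)x₂) ⪯≦_LU ϑF(x₁)+(1-ϑ)F(x₂)`),
then `(x₂-x₁)ᵀ∇F(x₁) ⪯≦_LU F(x₂) ⊖_gH F(x₁)` for all `x₁, x₂ ∈ T`. -/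
theorem interval_convex_gradient_inequality {n : ℕ} (T : Set (Fin n → ℝ))
    (hTo : IsOpen T) (hTc : Convex ℝ T)
    (Flo Fhi : (Fin n → ℝ) → ℝ) (hF : ∀ x ∈ T, Flo x ≤ Fhi x)
    (Glo Ghi : (Fin n → ℝ) → Fin n → ℝ)
    (hG : ∀ x ∈ T, ∀ i, Glo x i ≤ Ghi x i)
    -- gH-differentiability of F on T
    (hdiff : ∀ x ∈ T, ∀ d : Fin n → ℝ,
      Tendsto (fun ϑ : ℝ =>
          (1/ϑ) * min (Flo (x + ϑ • d) - Flo x) (Fhi (x + ϑ • d) - Fhi x))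
        (𝓝[>] 0) (𝓝 (∑ i, min (d i * Glo x i) (d i * Ghi x i))) ∧
      Tendsto (fun ϑ : ℝ =>
          (1/ϑ) * max (Flo (x + ϑ • d) - Flo x) (Fhi (x + ϑ • d) - Fhi x))
        (𝓝[>] 0) (𝓝 (∑ i, max (d i * Glo x i) (d i * Ghi x i))))
    -- convexity of F in the ⪯≦_LU sense
    (hconv : ∀ x₁ ∈ T, ∀ x₂ ∈ T, ∀ ϑ ∈ Ioo (0:ℝ) 1,
      Flo (ϑ • x₁ + (1-ϑ) • x₂) ≤ ϑ * Flo x₁ + (1-ϑ) * Flo x₂ ∧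
      Fhi (ϑ • x₁ + (1-ϑ) • x₂) ≤ ϑ * Fhi x₁ + (1-ϑ) * Fhi x₂) :
    ∀ x₁ ∈ T, ∀ x₂ ∈ T,
      (∑ i, min ((x₂ i - x₁ i) * Glo x₁ i) ((x₂ i - x₁ i) * Ghi x₁ i)) ≤
        min (Flo x₂ - Flo x₁) (Fhi x₂ - Fhi x₁) ∧
      (∑ i, max ((x₂ i - x₁ i) * Glo x₁ i) ((x₂ i - x₁ i) * Ghi x₁ i)) ≤
        max (Flo x₂ - Flo x₁) (Fhi x₂ - Fhi x₁) :=
  interval_convex_gradient_inequality_general T Flo Fhi Glo Ghi hdiff hconv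
end
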